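/- Convex-hull characterization of the rate region: let a, a', b, b', s be real numbers with 0 ≤ a ≤ a' ≤ s, 0 ≤ b ≤ b' ≤ s, s ≤ a' + b', s − b' ≤ a, and s − a' ≤ b. Define the regions 𝒜₁ = {(r₁, r₂) ∈ ℝ² : 0 ≤ r₁ ≤ a, 0 ≤ r₂ ≤ b', r₁ + r₂ ≤ s}, 𝒜₂ = {(r₁, r₂) ∈ ℝ² : 0 ≤ r₁ ≤ a', 0 ≤ r₂ ≤ b, r₁ + r₂ ≤ s}, and 𝒜 = {(r₁, r₂) ∈ ℝ² : 0 ≤ r₁ ≤ a', 0 ≤ r₂ ≤ b', r₁ + r₂ ≤ s}. Then the convex hull of 𝒜₁ ∪ 𝒜₂ equals 𝒜. -/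
import Mathlib


noncomputable section

set_option maxHeartbeats 800000 in
/-- **Convex-hull characterization of the rate region**: under the stated conditions
(the region-equality conditions `s − b' ≤ a` and `s − a' ≤ b` among them), the convex
hull of the two min-entropy rate regions `𝒜₁`, `𝒜₂` equals the full rate region `𝒜`. -/
theorem convexHull_rate_regions (a a' b b' s : ℝ)
    (ha0 : 0 ≤ a) (haa' : a ≤ a') (ha's : a' ≤ s)
    (hb0 : 0 ≤ b) (hbb' : b ≤ b') (hb's : b' ≤ s)
    (hs : s ≤ a' + b') (hc1 : s - b' ≤ a) (hc2 : s - a' ≤ b) :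
    convexHull ℝ
      ({r : ℝ × ℝ | 0 ≤ r.1 ∧ r.1 ≤ a ∧ 0 ≤ r.2 ∧ r.2 ≤ b' ∧ r.1 + r.2 ≤ s} ∪
       {r : ℝ × ℝ | 0 ≤ r.1 ∧ r.1 ≤ a' ∧ 0 ≤ r.2 ∧ r.2 ≤ b ∧ r.1 + r.2 ≤ s}) =
      {r : ℝ × ℝ | 0 ≤ r.1 ∧ r.1 ≤ a' ∧ 0 ≤ r.2 ∧ r.2 ≤ b' ∧ r.1 + r.2 ≤ s} := by
  apply Set.Subset.antisymm
  · apply convexHull_min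
    · rintro ⟨r1, r2⟩ (⟨h1, h2, h3, h4, h5⟩ | ⟨h1, h2, h3, h4, h5⟩) <;>
        exact ⟨h1, by linarith, h3, by linarith, h5⟩
    · intro x hx y hy α β hα hβ hαβ
      obtain ⟨hx1, hx2, hx3, hx4, hx5⟩ := hx
      obtain ⟨hy1, hy2, hy3, hy4, hy5⟩ := hy
      refine ⟨?_, ?_, ?_, ?_, ?_⟩ <;>
        simp only [Prod.fst_add, Prod.snd_add, Prod.smul_fst, Prod.smul_snd,
          smul_eq_mul] <;>
        nlinarith [mul_le_mul_of_nonneg_left hx2 hα, mul_le_mul_of_nonneg_left hy2 hβ,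
          mul_le_mul_of_nonneg_left hx4 hα, mul_le_mul_of_nonneg_left hy4 hβ,
          mul_le_mul_of_nonneg_left hx5 hα, mul_le_mul_of_nonneg_left hy5 hβ,
          mul_nonneg hα hx1, mul_nonneg hβ hy1, mul_nonneg hα hx3, mul_nonneg hβ hy3]
  · rintro ⟨r1, r2⟩ ⟨h1, h2, h3, h4, h5⟩
    by_cases hra : r1 ≤ a
    · exact subset_convexHull ℝ _ (Or.inl ⟨h1, hra, h3, h4, h5⟩)
    push_neg at hra
    set c := r1 + r2 with hc
    set t := min a' c with ht
    have hrc : r1 ≤ c := by simp only [hc]; linarith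
    have hrt : r1 ≤ t := le_min h2 hrc
    have hat : a < t := lt_of_lt_of_le hra hrt
    have hp : ((a, c - a) : ℝ × ℝ) ∈
        {r : ℝ × ℝ | 0 ≤ r.1 ∧ r.1 ≤ a ∧ 0 ≤ r.2 ∧ r.2 ≤ b' ∧ r.1 + r.2 ≤ s} := by
      refine ⟨ha0, le_refl _, by simp; linarith, by simp; linarith, by simp; linarith⟩
    have hct : 0 ≤ c - t := by simp only [ht]; have := min_le_right a' c; linarith
    have hctb : c - t ≤ b := by
      rcases le_total a' c with h | h
      · have : t = a' := min_eq_left h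
        rw [this]; linarith
      · have : t = c := min_eq_right h
        rw [this]; linarith
    have hq : ((t, c - t) : ℝ × ℝ) ∈
        {r : ℝ × ℝ | 0 ≤ r.1 ∧ r.1 ≤ a' ∧ 0 ≤ r.2 ∧ r.2 ≤ b ∧ r.1 + r.2 ≤ s} := by
      refine ⟨le_trans ha0 (le_of_lt hat), min_le_left _ _, hct, hctb, by simp; linarith⟩
    have hmem : ((r1, r2) : ℝ × ℝ) ∈ segment ℝ ((a, c - a) : ℝ × ℝ) ((t, c - t) : ℝ × ℝ) := by
      set lam := (r1 - a) / (t - a) with hlam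
      have hta : 0 < t - a := by linarith
      have hlam0 : 0 ≤ lam := div_nonneg (by linarith) (le_of_lt hta)
      have hlam1 : lam ≤ 1 := by
        rw [hlam, div_le_one hta]; linarith
      have hta' : (t - a) ≠ 0 := ne_of_gt hta
      have h' : lam * (t - a) = r1 - a := div_mul_cancel₀ _ hta'
      have hfst : (1 - lam) * a + lam * t = r1 := by linear_combination h'
      have hsnd : (1 - lam) * (c - a) + lam * (c - t) = r2 := by
        have he : (1 - lam) * (c - a) + lam * (c - t) = c - ((1 - lam) * a + lam * t) := by
          ring
        rw [he, hfst, hc]; ring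
      refine ⟨1 - lam, lam, by linarith, hlam0, by ring, ?_⟩
      show (1 - lam) • ((a, c - a) : ℝ × ℝ) + lam • ((t, c - t) : ℝ × ℝ) = (r1, r2)
      rw [Prod.smul_mk, Prod.smul_mk, Prod.mk_add_mk, Prod.mk.injEq]
      exact ⟨by rw [smul_eq_mul, smul_eq_mul]; exact hfst,
             by rw [smul_eq_mul, smul_eq_mul]; exact hsnd⟩
    have hconv : Convex ℝ (convexHull ℝ
        ({r : ℝ × ℝ | 0 ≤ r.1 ∧ r.1 ≤ a ∧ 0 ≤ r.2 ∧ r.2 ≤ b' ∧ r.1 + r.2 ≤ s} ∪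
         {r : ℝ × ℝ | 0 ≤ r.1 ∧ r.1 ≤ a' ∧ 0 ≤ r.2 ∧ r.2 ≤ b ∧ r.1 + r.2 ≤ s})) :=
      convex_convexHull ℝ _
    exact hconv.segment_subset
      (subset_convexHull ℝ _ (Or.inl hp))
      (subset_convexHull ℝ _ (Or.inr hq)) hmem
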